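/- arXiv:1604.04904 — 4 statements merged into one kernel-verified Lean document; each statement's English description precedes it below -/
import Mathlib

section
/- Let h and k be coprime odd positive integers. Then B₁(h,k) = h·s₅(h,k) + 1/(2k) - 1/2. -/
/-!
For `0 < j < k` write `h j = k q + r` with `0 < r < k`. As `h` and `k` are odd,
`j + q ≡ r (mod 2)`, and `q - h ((j / k) - 1 / 2) = h / 2 - r / k`; hence
`B₁(h,k) - h s₅(h,k)` is `∑ⱼ (-1)^r (h / 2 - r / k)`. Since `h` is invertible mod `k`,
`r = h j mod k` runs over `1, …, k - 1` exactly once, and the alternating sum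
`∑_{r=1}^{k-1} (-1)^r (h / 2 - r / k)` equals `-(k - 1) / (2 k)`.
-/

/-- The sawtooth function `((x))`: equals `x - ⌊x⌋ - 1/2` if `x` is not an integer,
and `0` if `x` is an integer. -/
def saw (x : ℚ) : ℚ := if x = (⌊x⌋ : ℚ) then 0 else x - ⌊x⌋ - 1/2

/-- `B₁(h,k) = Σ_{j=1}^{k-1} (-1)^{j+⌊hj/k⌋}·⌊hj/k⌋`. -/
noncomputable def B1 (h k : ℤ) : ℚ :=
  ∑ j ∈ Finset.Icc (1 : ℤ) (k - 1),
    (-1 : ℚ) ^ (j + ⌊((h * j : ℤ) : ℚ) / (k : ℚ)⌋) * (⌊((h * j : ℤ) : ℚ) / (k : ℚ)⌋ : ℚ)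

/-- The Hardy sum `s₅(h,k) = Σ_{j=1}^{k} (-1)^{j+⌊hj/k⌋}·((j/k))`. -/
noncomputable def s5 (h k : ℤ) : ℚ :=
  ∑ j ∈ Finset.Icc (1 : ℤ) k,
    (-1 : ℚ) ^ (j + ⌊((h * j : ℤ) : ℚ) / (k : ℚ)⌋) * saw ((j : ℚ) / (k : ℚ))

open Finset

theorem saw_intCast (n : ℤ) : saw n = 0 := by
  simp [saw]

theorem saw_of_pos_of_lt_one {x : ℚ} (h0 : 0 < x) (h1 : x < 1) : saw x = x - 1 / 2 := by
  have hfl : ⌊x⌋ = 0 := Int.floor_eq_zero_iff.mpr ⟨h0.le, h1⟩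
  simp [saw, hfl, h0.ne']

theorem Rat.floor_intCast_div_intCast_of_pos (a : ℤ) {b : ℤ} (hb : 0 < b) :
    ⌊(a : ℚ) / b⌋ = a / b := by
  lift b to ℕ using hb.le
  exact_mod_cast Rat.floor_intCast_div_natCast a b

theorem neg_one_zpow_eq_of_even_sub {K : Type*} [DivisionRing K] {a b : ℤ} (h : Even (a - b)) :
    (-1 : K) ^ a = (-1) ^ b := by
  rw [← sub_add_cancel a b, zpow_add₀ (neg_ne_zero.2 one_ne_zero), h.neg_one_zpow, one_mul]

theorem Int.even_add_ediv_sub_emod {h k : ℤ} (hh : Odd h) (hk : Odd k) (j : ℤ) :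
    Even (j + h * j / k - h * j % k) := by
  obtain ⟨a, rfl⟩ := hh
  obtain ⟨b, rfl⟩ := hk
  have hdiv := Int.mul_ediv_add_emod ((2 * a + 1) * j) (2 * b + 1)
  set q := (2 * a + 1) * j / (2 * b + 1)
  set r := (2 * a + 1) * j % (2 * b + 1)
  exact ⟨(2 * b + 1) * q - a * j - b * q, by linear_combination -hdiv⟩

theorem Int.emod_mul_mem_Icc {h k j : ℤ} (hco : IsCoprime h k) (hk : 0 < k)
    (hj : j ∈ Icc 1 (k - 1)) : h * j % k ∈ Icc 1 (k - 1) := by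
  rw [mem_Icc] at hj ⊢
  have hne : h * j % k ≠ 0 := fun h0 => by
    have := Int.le_of_dvd (by omega) (hco.symm.dvd_of_dvd_mul_left (Int.dvd_of_emod_eq_zero h0))
    omega
  have := Int.emod_nonneg (h * j) hk.ne'
  have := Int.emod_lt_of_pos (h * j) hk
  omega

theorem Int.emod_mul_emod_mul_of_add_eq_one {h k u v j : ℤ} (huv : u * h + v * k = 1)
    (hj : j ∈ Icc 1 (k - 1)) : u * (h * j % k) % k = j := by
  rw [mem_Icc] at hj
  rw [Int.mul_emod, Int.emod_emod_of_dvd _ dvd_rfl, ← Int.mul_emod,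
    show u * (h * j) = j + k * (-(v * j)) by linear_combination j * huv,
    Int.add_mul_emod_self_left, Int.emod_eq_of_lt (by omega) (by omega)]

theorem Finset.sum_Icc_emod_mul {M : Type*} [AddCommMonoid M] {h k : ℤ} (hco : IsCoprime h k)
    (hk : 0 < k) (f : ℤ → M) :
    ∑ j ∈ Icc 1 (k - 1), f (h * j % k) = ∑ r ∈ Icc 1 (k - 1), f r := by
  obtain ⟨u, v, huv⟩ := id hco
  have hu : IsCoprime u k := ⟨h, v, by linear_combination huv⟩
  have hvu : h * u + v * k = 1 := by linear_combination huv
  exact sum_nbij' (fun j => h * j % k) (fun r => u * r % k)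
    (fun _ hj => Int.emod_mul_mem_Icc hco hk hj) (fun _ hr => Int.emod_mul_mem_Icc hu hk hr)
    (fun _ hj => Int.emod_mul_emod_mul_of_add_eq_one huv hj)
    (fun _ hr => Int.emod_mul_emod_mul_of_add_eq_one hvu hr) (fun _ _ => rfl)

theorem sum_Icc_two_mul_neg_one_zpow_mul_sub_div {K : Type*} [Field K] (c d : K) (m : ℕ) :
    ∑ r ∈ Icc (1 : ℤ) (2 * m), (-1 : K) ^ r * (c - r / d) = -m / d := by
  induction m with
  | zero => simp
  | succ m ih =>
    have hodd : (-1 : K) ^ (2 * (m : ℤ) + 1) = -1 := Odd.neg_one_zpow ⟨m, rfl⟩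
    rw [show (2 * ((m + 1 : ℕ) : ℤ)) = 2 * m + 1 + 1 by push_cast; ring,
      ← insert_Icc_right_eq_Icc_add_one (by omega),
      ← insert_Icc_right_eq_Icc_add_one (by omega), sum_insert (by simp), sum_insert (by simp),
      ih, zpow_add_one₀ (by norm_num), hodd]
    push_cast
    ring

theorem sum_Icc_neg_one_zpow_mul_sub_div {K : Type*} [Field K] [CharZero K] {k : ℤ} (hk : Odd k)
    (hk0 : 0 < k) (c : K) :
    ∑ r ∈ Icc 1 (k - 1), (-1 : K) ^ r * (c - r / k) = 1 / (2 * k) - 1 / 2 := by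
  obtain ⟨b, rfl⟩ := hk
  lift b to ℕ using (by omega)
  have hk' : (2 * b + 1 : K) ≠ 0 := by norm_cast
  rw [add_sub_cancel_right, sum_Icc_two_mul_neg_one_zpow_mul_sub_div]
  push_cast
  rw [eq_sub_iff_add_eq, div_add_div _ _ hk' two_ne_zero,
    div_eq_div_iff (mul_ne_zero hk' two_ne_zero) (mul_ne_zero two_ne_zero hk')]
  ring

theorem s5_eq_sum_Icc_sub_one (h : ℤ) {k : ℤ} (hk : 0 < k) :
    s5 h k = ∑ j ∈ Icc 1 (k - 1),
      (-1 : ℚ) ^ (j + ⌊((h * j : ℤ) : ℚ) / k⌋) * saw (j / k) := by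
  have hk' : (k : ℚ) ≠ 0 := by positivity
  rw [s5, ← insert_Icc_sub_one_right_eq_Icc hk, sum_insert (by simp), div_self hk',
    ← Int.cast_one, saw_intCast, mul_zero, zero_add]

theorem neg_one_zpow_mul_floor_sub_mul_saw {h k j : ℤ} (hh : Odd h) (hk : Odd k) (hk0 : 0 < k)
    (hj : j ∈ Icc 1 (k - 1)) :
    (-1 : ℚ) ^ (j + ⌊((h * j : ℤ) : ℚ) / k⌋) * ⌊((h * j : ℤ) : ℚ) / k⌋
        - h * ((-1 : ℚ) ^ (j + ⌊((h * j : ℤ) : ℚ) / k⌋) * saw (j / k))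
      = (-1 : ℚ) ^ (h * j % k) * (h / 2 - ((h * j % k : ℤ) : ℚ) / k) := by
  rw [mem_Icc] at hj
  have hk' : (0 : ℚ) < k := by exact_mod_cast hk0
  have hjk : (j : ℚ) / k < 1 := (div_lt_one hk').2 (by exact_mod_cast (by omega : j < k))
  rw [Rat.floor_intCast_div_intCast_of_pos _ hk0,
    neg_one_zpow_eq_of_even_sub (Int.even_add_ediv_sub_emod hh hk j),
    saw_of_pos_of_lt_one (div_pos (by exact_mod_cast hj.1) hk') hjk]
  have hdiv : ((k * (h * j / k) + h * j % k : ℤ) : ℚ) = h * j := by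
    rw [Int.mul_ediv_add_emod]; push_cast; ring
  push_cast at hdiv
  generalize (-1 : ℚ) ^ (h * j % k) = s
  field_simp
  linear_combination 2 * s * hdiv

theorem stmt_1_general (h k : ℤ) (hk : 0 < k) (hco : IsCoprime h k)
    (hho : Odd h) (hko : Odd k) :
    B1 h k = (h : ℚ) * s5 h k + 1 / (2 * (k : ℚ)) - 1 / 2 := by
  calc B1 h k = h * s5 h k + (B1 h k - h * s5 h k) := by ring
    _ = h * s5 h k + ∑ j ∈ Icc 1 (k - 1),
          (-1 : ℚ) ^ (h * j % k) * (h / 2 - ((h * j % k : ℤ) : ℚ) / k) := by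
      rw [B1, s5_eq_sum_Icc_sub_one h hk, mul_sum, ← sum_sub_distrib,
        sum_congr rfl fun j hj => neg_one_zpow_mul_floor_sub_mul_saw hho hko hk hj]
    _ = h * s5 h k + ∑ r ∈ Icc 1 (k - 1), (-1 : ℚ) ^ r * (h / 2 - (r : ℚ) / k) := by
      rw [sum_Icc_emod_mul hco hk fun r => (-1 : ℚ) ^ r * (h / 2 - (r : ℚ) / k)]
    _ = h * s5 h k + 1 / (2 * k) - 1 / 2 := by
      rw [sum_Icc_neg_one_zpow_mul_sub_div hko hk]
      ring

theorem stmt_1 (h k : ℤ) (hh : 0 < h) (hk : 0 < k) (hco : IsCoprime h k)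
    (hho : Odd h) (hko : Odd k) :
    B1 h k = (h : ℚ) * s5 h k + 1 / (2 * (k : ℚ)) - 1 / 2 :=
  stmt_1_general h k hk hco hho hko
end

section
/- Let h and k be coprime positive integers with h + k odd. Then Y₁(h,k) + Y₁(k,h) = 2(k-1)·B₁(h,k) + 2(h-1)·B₁(k,h). -/
/-- `Y₁(h,k) = Σ_{j=1}^{k-1} (2j-1)·(-1)^{j+⌊hj/k⌋}·⌊hj/k⌋`. -/
noncomputable def Y1 (h k : ℤ) : ℚ :=
  ∑ j ∈ Finset.Icc (1 : ℤ) (k - 1),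
    (2 * (j : ℚ) - 1) * (-1 : ℚ) ^ (j + ⌊((h * j : ℤ) : ℚ) / (k : ℚ)⌋)
      * (⌊((h * j : ℤ) : ℚ) / (k : ℚ)⌋ : ℚ)

/-!
Since `(-1)^f f = ∑_{i=1}^{f} (-1)^i (2i - 1)`, and since for coprime `h, k` and `0 < j < k` we have
`i ≤ ⌊hj/k⌋ ↔ ik < jh`, the difference `Y₁(h,k) - 2(k-1)B₁(h,k)` is a signed sum over the lattice
points `(i, j)` of the box `[1, h-1] × [1, k-1]` lying strictly on one side of the diagonal `ik = jh`.
The point reflection `(i, j) ↦ (h - i, k - j)` maps the box onto itself and exchanges the two sides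
of the diagonal; as `h + k` is odd it flips the sign `(-1)^(i+j)`, and it turns the summand for
`(h, k)` into minus the summand for `(k, h)`. So the two lattice sums cancel.
-/

open Finset

lemma neg_one_zpow_eq_neg_of_odd_add {α : Type*} [DivisionMonoid α] [HasDistribNeg α] {m n : ℤ}
    (hmn : Odd (m + n)) : (-1 : α) ^ m = -(-1) ^ n := by
  rcases Int.even_or_odd n with hn | hn
  · rw [(Int.odd_add.mp hmn).mpr hn |>.neg_one_zpow, hn.neg_one_zpow]
  · have hm : Even m := by
      rw [← Int.not_odd_iff_even, Int.odd_add.mp hmn, Int.not_even_iff_odd]; exact hn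
    rw [hm.neg_one_zpow, hn.neg_one_zpow, neg_neg]

lemma sum_Icc_one_reflect {M : Type*} [AddCommMonoid M] (f : ℤ → M) (n : ℤ) :
    ∑ i ∈ Icc 1 (n - 1), f (n - i) = ∑ i ∈ Icc 1 (n - 1), f i :=
  sum_nbij' (n - ·) (n - ·) (fun i hi => by simp only [mem_Icc] at hi ⊢; omega)
    (fun i hi => by simp only [mem_Icc] at hi ⊢; omega) (by simp) (by simp) (by simp)

lemma sum_Icc_neg_one_zpow_mul_two_mul_sub_one {n : ℤ} (hn : 0 ≤ n) :
    ∑ i ∈ Icc 1 n, (-1 : ℚ) ^ i * (2 * i - 1) = (-1) ^ n * n := by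
  induction n, hn using Int.leInduction with
  | base => simp
  | succ n hn ih =>
    rw [← insert_Icc_right_eq_Icc_add_one (by omega), sum_insert (by simp), ih,
      zpow_add_one₀ (by norm_num)]
    push_cast
    ring

lemma filter_Icc_mul_lt_eq_Icc_ediv {h k j : ℤ} (hh : 0 < h) (hk : 0 < k) (hj : j < k)
    (hkj : ¬ k ∣ h * j) :
    {i ∈ Icc 1 (h - 1) | i * k < j * h} = Icc 1 (h * j / k) := by
  ext i
  have hlt : i * k < j * h ↔ i * k ≤ h * j := by
    rw [mul_comm j]
    exact ⟨le_of_lt, fun hle => lt_of_le_of_ne hle fun heq => hkj ⟨i, by rw [← heq, mul_comm]⟩⟩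
  simp only [mem_filter, mem_Icc, hlt, Int.le_ediv_iff_mul_le hk]
  constructor
  · rintro ⟨⟨h1, -⟩, h2⟩; exact ⟨h1, h2⟩
  · rintro ⟨h1, h2⟩; exact ⟨⟨h1, by nlinarith⟩, h2⟩

noncomputable def latticeTerm (h k i j : ℤ) : ℚ :=
  if i * k < j * h then (-1) ^ (i + j) * (2 * i - 1) * (2 * j - 2 * k + 1) else 0

noncomputable def latticeSum (h k : ℤ) : ℚ :=
  ∑ j ∈ Icc 1 (k - 1), ∑ i ∈ Icc 1 (h - 1), latticeTerm h k i j

lemma sum_latticeTerm {h k j : ℤ} (hh : 0 < h) (hk : 0 < k) (hj₀ : 0 ≤ j) (hj : j < k)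
    (hkj : ¬ k ∣ h * j) :
    ∑ i ∈ Icc 1 (h - 1), latticeTerm h k i j
      = (-1) ^ j * (2 * j - 2 * k + 1) * ((-1) ^ (h * j / k) * (h * j / k : ℤ)) := by
  have hrow : ∀ i, latticeTerm h k i j = (-1) ^ j * (2 * j - 2 * k + 1) *
      if i * k < j * h then (-1 : ℚ) ^ i * (2 * i - 1) else 0 := by
    intro i
    rw [latticeTerm, mul_ite, mul_zero, zpow_add₀ (by norm_num)]
    congr 1
    ring
  rw [sum_congr rfl fun i _ => hrow i, ← mul_sum, ← sum_filter,
    filter_Icc_mul_lt_eq_Icc_ediv hh hk hj hkj,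
    sum_Icc_neg_one_zpow_mul_two_mul_sub_one (Int.ediv_nonneg (by positivity) hk.le)]

lemma Y1_sub_mul_B1 {h k : ℤ} (hh : 0 < h) (hk : 0 < k) (hco : IsCoprime h k) :
    Y1 h k - 2 * ((k : ℚ) - 1) * B1 h k = latticeSum h k := by
  rw [Y1, B1, latticeSum, mul_sum, ← sum_sub_distrib]
  refine sum_congr rfl fun j hj => ?_
  obtain ⟨hj₁, hj⟩ := mem_Icc.mp hj
  have hkj : ¬ k ∣ h * j := fun hdvd =>
    absurd (Int.le_of_dvd (by omega) (hco.symm.dvd_of_dvd_mul_left hdvd)) (by omega)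
  lift k to ℕ using hk.le
  rw [sum_latticeTerm hh hk (by omega) (by omega) hkj, Int.cast_natCast,
    Rat.floor_intCast_div_natCast, zpow_add₀ (by norm_num)]
  ring

lemma latticeTerm_reflect {h k : ℤ} (hodd : Odd (h + k)) (i j : ℤ) :
    latticeTerm h k (h - i) (k - j) = -latticeTerm k h j i := by
  have hsign : (-1 : ℚ) ^ (h - i + (k - j)) = -(-1) ^ (j + i) :=
    neg_one_zpow_eq_neg_of_odd_add (by rwa [show h - i + (k - j) + (j + i) = h + k by ring])
  have hcond : (h - i) * k < (k - j) * h ↔ j * h < i * k := by constructor <;> intro <;> linarith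
  simp only [latticeTerm, hcond, hsign]
  split_ifs
  · push_cast; ring
  · simp

lemma latticeSum_swap {h k : ℤ} (hodd : Odd (h + k)) : latticeSum k h = -latticeSum h k := by
  calc latticeSum k h
      = ∑ j ∈ Icc 1 (k - 1), ∑ i ∈ Icc 1 (h - 1), latticeTerm k h j i := by
        rw [latticeSum, sum_comm]
    _ = -∑ j ∈ Icc 1 (k - 1), ∑ i ∈ Icc 1 (h - 1), latticeTerm h k (h - i) (k - j) := by
        simp only [latticeTerm_reflect hodd, sum_neg_distrib, neg_neg]
    _ = -latticeSum h k := by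
        rw [latticeSum,
          sum_Icc_one_reflect (fun j => ∑ i ∈ Icc 1 (h - 1), latticeTerm h k (h - i) j)]
        exact congrArg _ (sum_congr rfl fun j _ => sum_Icc_one_reflect (latticeTerm h k · j) h)

theorem stmt_5 (h k : ℤ) (hh : 0 < h) (hk : 0 < k) (hco : IsCoprime h k)
    (hodd : Odd (h + k)) :
    Y1 h k + Y1 k h = 2 * ((k : ℚ) - 1) * B1 h k + 2 * ((h : ℚ) - 1) * B1 k h := by
  have hhk := Y1_sub_mul_B1 hh hk hco
  have hkh := Y1_sub_mul_B1 hk hh hco.symm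
  have hswap := latticeSum_swap hodd
  linarith
end

section
/- Let n be a positive natural number and set h = F_{6n-1} and k = F_{6n+1}, where F_m is the m-th Fibonacci number. Then h·Y(h,k) + k·Y(k,h) = 2h² + 2k² - 4hk. -/
/-- The Simsek sum `Y(h,k) = 4k·Σ_{j=1}^{k} (-1)^{j+⌊hj/k⌋}·((j/k))`. -/
noncomputable def simsekY (h k : ℤ) : ℚ :=
  4 * k * ∑ j ∈ Finset.Icc (1 : ℤ) k,
    (-1 : ℚ) ^ (j + ⌊((h * j : ℤ) : ℚ) / (k : ℚ)⌋) * saw ((j : ℚ) / (k : ℚ))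

/-!
For odd coprime `h, k` the sign `(-1)^(j + ⌊hj/k⌋)` equals `(-1)^(hj mod k)`, and `j ↦ hj mod k`
permutes `[0, k)`. Hence the signs sum to `1` over `[0, k)`, and `Y(h,k) = 4 N(h,k)` where
`N(h,k) = Σ_{j<k} (-1)^(j+⌊hj/k⌋) j` (`Simsek.indexSum`). Writing `hj = k⌊hj/k⌋ + (hj mod k)`
and permuting again gives `h N(h,k) - k V(h,k) = (k-1)/2`, where `V` (`Simsek.floorSum`) weights
the signs by `⌊hj/k⌋` instead of `j`. Cutting `[0, k)` into the blocks on which `⌊hj/k⌋` is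
constant and summing the alternating series on each block telescopes to
`2 N(h,k) + 2 V(k,h) = k - 1`. Together these give the reciprocity law
`2h N(h,k) + 2k N(k,h) = hk - 1`, i.e. `h Y(h,k) + k Y(k,h) = 2(hk - 1)`.

For `h = F_{6n-1}` and `k = F_{6n+1}`, both odd since `3 ∤ 6n ± 1`, Cassini's identity gives
`hk - 1 = F_{6n}^2 = (k - h)^2`.
-/

open Finset

namespace Finset

theorem sum_Ico_neg_one_pow {a b : ℕ} (hab : a ≤ b) :
    ∑ j ∈ Ico a b, (-1 : ℚ) ^ j = ((-1) ^ a - (-1) ^ b) / 2 := by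
  let f (j : ℕ) : ℚ := -(-1) ^ j / 2
  calc ∑ j ∈ Ico a b, (-1 : ℚ) ^ j = ∑ j ∈ Ico a b, (f (j + 1) - f j) :=
        sum_congr rfl fun j _ ↦ by simp only [f]; ring
    _ = f b - f a := sum_Ico_sub f hab
    _ = _ := by simp only [f]; ring

theorem sum_Ico_neg_one_pow_mul {a b : ℕ} (hab : a ≤ b) :
    ∑ j ∈ Ico a b, (-1 : ℚ) ^ j * j
      = ((-1) ^ a * (2 * a - 1) - (-1) ^ b * (2 * b - 1)) / 4 := by
  let f (j : ℕ) : ℚ := -(-1) ^ j * (2 * j - 1) / 4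
  calc ∑ j ∈ Ico a b, (-1 : ℚ) ^ j * j = ∑ j ∈ Ico a b, (f (j + 1) - f j) :=
        sum_congr rfl fun j _ ↦ by simp only [f]; push_cast; ring
    _ = f b - f a := sum_Ico_sub f hab
    _ = _ := by simp only [f]; ring

theorem sum_range_neg_one_pow_of_odd {k : ℕ} (hk : Odd k) :
    ∑ t ∈ range k, (-1 : ℚ) ^ t = 1 := by
  rw [range_eq_Ico, sum_Ico_neg_one_pow (Nat.zero_le k), hk.neg_one_pow]
  norm_num

theorem sum_range_neg_one_pow_mul_of_odd {k : ℕ} (hk : Odd k) :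
    ∑ t ∈ range k, (-1 : ℚ) ^ t * t = (k - 1) / 2 := by
  rw [range_eq_Ico, sum_Ico_neg_one_pow_mul (Nat.zero_le k), hk.neg_one_pow]
  push_cast
  ring

theorem sum_range_mul_mod_of_coprime {M : Type*} [AddCommMonoid M] {h k : ℕ}
    (hhk : Nat.Coprime h k) (f : ℕ → M) :
    ∑ j ∈ range k, f (h * j % k) = ∑ t ∈ range k, f t := by
  rcases k.eq_zero_or_pos with rfl | hk
  · simp
  have hinj : Set.InjOn (fun j ↦ h * j % k) (range k) := by
    intro i hi j hj hij
    have := Nat.ModEq.cancel_left_of_coprime (hhk.symm) hij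
    simpa [Nat.ModEq, Nat.mod_eq_of_lt (mem_range.mp hi), Nat.mod_eq_of_lt (mem_range.mp hj)]
      using this
  have himage : (range k).image (fun j ↦ h * j % k) = range k :=
    eq_of_subset_of_card_le (fun t ht ↦ by
      obtain ⟨j, -, rfl⟩ := mem_image.mp ht
      exact mem_range.mpr (Nat.mod_lt _ hk)) (card_image_of_injOn hinj).ge
  rw [← sum_image hinj, himage]

theorem filter_range_div_eq_Ico {h k q : ℕ} (hh : 0 < h) (hk : 0 < k) (hq : q < h) :
    {j ∈ range k | h * j / k = q} = Ico (k * q ⌈/⌉ h) (k * (q + 1) ⌈/⌉ h) := by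
  ext j
  have hdiv : h * j / k = q ↔ k * q ≤ h * j ∧ h * j < k * (q + 1) := by
    rw [le_antisymm_iff, Nat.le_div_iff_mul_le hk, ← Nat.lt_succ_iff, Nat.div_lt_iff_lt_mul hk,
      mul_comm q k, mul_comm (q + 1) k, and_comm]
  have hjk : h * j < k * (q + 1) → j < k := fun hj ↦
    Nat.lt_of_mul_lt_mul_left (a := h) (by nlinarith [Nat.mul_le_mul_left k hq])
  simp only [mem_filter, mem_range, mem_Ico, ceilDiv_le_iff_le_mul hh, ← not_le, hdiv]
  exact ⟨And.right, fun hj ↦ ⟨not_le.mpr (hjk (not_le.mp hj.2)), hj⟩⟩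

theorem sum_range_eq_sum_Ico_ceilDiv {M : Type*} [AddCommMonoid M] {h k : ℕ} (hh : 0 < h)
    (hk : 0 < k) (F : ℕ → ℕ → M) :
    ∑ j ∈ range k, F j (h * j / k)
      = ∑ q ∈ range h, ∑ j ∈ Ico (k * q ⌈/⌉ h) (k * (q + 1) ⌈/⌉ h), F j q := by
  have hmaps : ∀ j ∈ range k, h * j / k ∈ range h := fun j hj ↦ by
    rw [mem_range, Nat.div_lt_iff_lt_mul hk]
    exact Nat.mul_lt_mul_of_pos_left (mem_range.mp hj) hh
  rw [← sum_fiberwise_of_maps_to hmaps]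
  refine sum_congr rfl fun q hq ↦ ?_
  rw [← filter_range_div_eq_Ico hh hk (mem_range.mp hq)]
  exact sum_congr rfl fun j hj ↦ by rw [(mem_filter.mp hj).2]

end Finset

namespace Nat

theorem ceilDiv_eq_div_add_one {h m : ℕ} (hh : 0 < h) (hm : ¬ h ∣ m) :
    m ⌈/⌉ h = m / h + 1 := by
  refine le_antisymm ((ceilDiv_le_iff_le_mul hh).mpr (Nat.lt_mul_div_succ m hh).le) ?_
  by_contra hlt
  have hle := (ceilDiv_le_iff_le_mul hh).mp (Nat.lt_succ_iff.mp (not_le.mp hlt))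
  exact hm ⟨m / h, le_antisymm hle (Nat.mul_div_le m h)⟩

theorem odd_fib_iff_not_three_dvd (n : ℕ) : Odd (fib n) ↔ ¬ 3 ∣ n := by
  induction n using Nat.strong_induction_on with
  | _ n ih =>
    match n, ih with
    | 0, _ => decide
    | 1, _ => decide
    | 2, _ => decide
    | n + 3, ih =>
      have hfib : fib (n + 3) = fib n + 2 * fib (n + 1) := by
        rw [fib_add_two, fib_add_two]; ring
      rw [hfib, Nat.odd_add, ih n (by omega)]
      simp only [even_two_mul, iff_true]
      omega

theorem fib_mul_fib_add_two_sub_sq (m : ℕ) :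
    (fib m : ℤ) * fib (m + 2) - fib (m + 1) ^ 2 = (-1) ^ (m + 1) := by
  have := Int.fib_succ_mul_fib_pred_sub_fib_sq (m + 1 : ℕ)
  rw [show ((m + 1 : ℕ) : ℤ) + 1 = (m + 2 : ℕ) by push_cast; ring,
    show ((m + 1 : ℕ) : ℤ) - 1 = m by push_cast; ring] at this
  simpa only [Int.fib_natCast, Int.natAbs_natCast, mul_comm] using this

end Nat

namespace Simsek

def sign (h k j : ℕ) : ℚ := (-1) ^ (j + h * j / k)

def indexSum (h k : ℕ) : ℚ := ∑ j ∈ range k, sign h k j * j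

def floorSum (h k : ℕ) : ℚ := ∑ j ∈ range k, sign h k j * (h * j / k : ℕ)

variable {h k : ℕ}

theorem sign_eq_neg_one_pow_mod (hh : Odd h) (hk : Odd k) (j : ℕ) :
    sign h k j = (-1) ^ (h * j % k) := by
  have hdiv := Nat.div_add_mod (h * j) k
  have hj : h * j % 2 = j % 2 := by simp [Nat.mul_mod, Nat.odd_iff.mp hh]
  have hq : k * (h * j / k) % 2 = h * j / k % 2 := by simp [Nat.mul_mod, Nat.odd_iff.mp hk]
  rw [sign, neg_one_pow_eq_pow_mod_two, neg_one_pow_eq_pow_mod_two (n := h * j % k)]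
  congr 1
  omega

theorem sum_range_sign (hh : Odd h) (hk : Odd k) (hhk : Nat.Coprime h k) :
    ∑ j ∈ range k, sign h k j = 1 := by
  simp_rw [sign_eq_neg_one_pow_mod hh hk]
  rw [sum_range_mul_mod_of_coprime hhk (fun t ↦ (-1 : ℚ) ^ t), sum_range_neg_one_pow_of_odd hk]

theorem mul_indexSum_sub_mul_floorSum (hh : Odd h) (hk : Odd k) (hhk : Nat.Coprime h k) :
    h * indexSum h k - k * floorSum h k = (k - 1) / 2 := by
  calc h * indexSum h k - k * floorSum h k
      = ∑ j ∈ range k, (-1 : ℚ) ^ (h * j % k) * (h * j % k : ℕ) := by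
        rw [indexSum, floorSum, mul_sum, mul_sum, ← sum_sub_distrib]
        refine sum_congr rfl fun j _ ↦ ?_
        have hdiv : ((h * j % k : ℕ) : ℚ) = h * j - k * (h * j / k : ℕ) := by
          rw [eq_sub_iff_add_eq, ← Nat.cast_mul, ← Nat.cast_add, Nat.mod_add_div, Nat.cast_mul]
        rw [sign_eq_neg_one_pow_mod hh hk, hdiv]
        ring
    _ = (k - 1) / 2 := by
        rw [sum_range_mul_mod_of_coprime hhk (fun t ↦ (-1 : ℚ) ^ t * t),
          sum_range_neg_one_pow_mul_of_odd hk]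

theorem two_mul_indexSum_add_two_mul_floorSum (hh : Odd h) (hk : Odd k) (hhk : Nat.Coprime h k) :
    2 * indexSum h k + 2 * floorSum k h = k - 1 := by
  let c (q : ℕ) : ℕ := k * q ⌈/⌉ h
  -- `c q` starts the block where `⌊hj/k⌋ = q`; as `(-1)^q` flips from block to block, the
  -- alternating block sums of `(-1)^j j` add up to boundary terms `u q + u (q + 1)`.
  let u (q : ℕ) : ℚ := (-1) ^ (q + c q) * (2 * c q - 1)
  have hblocks : 4 * indexSum h k = ∑ q ∈ range h, (u q + u (q + 1)) := by
    simp only [indexSum, sign, mul_sum]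
    rw [sum_range_eq_sum_Ico_ceilDiv hh.pos hk.pos (fun j q ↦ 4 * ((-1 : ℚ) ^ (j + q) * j))]
    refine sum_congr rfl fun q _ ↦ ?_
    have hmono := (gc_mul_ceilDiv hh.pos).monotone_l (Nat.mul_le_mul_left k q.le_succ)
    calc ∑ j ∈ Ico (c q) (c (q + 1)), 4 * ((-1 : ℚ) ^ (j + q) * j)
        = 4 * (-1) ^ q * ∑ j ∈ Ico (c q) (c (q + 1)), (-1 : ℚ) ^ j * j := by
          rw [mul_sum]; exact sum_congr rfl fun j _ ↦ by ring
      _ = u q + u (q + 1) := by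
          rw [sum_Ico_neg_one_pow_mul hmono]
          simp only [u, pow_add, pow_succ]
          ring
  have hu : ∀ q ∈ range h, u q = -(sign k h q * (2 * (k * q / h : ℕ) + 1)) := by
    intro q hq
    rcases q.eq_zero_or_pos with rfl | hq0
    · simp [u, c, sign]
    · have hndvd : ¬ h ∣ k * q := fun hdvd ↦
        not_lt.mpr (Nat.le_of_dvd hq0 (hhk.dvd_of_dvd_mul_left hdvd)) (mem_range.mp hq)
      simp only [u, c, sign, Nat.ceilDiv_eq_div_add_one hh.pos hndvd]
      push_cast
      ring
  have hu0 : u 0 = -1 := by simp [u, c]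
  have huh : u h = 2 * k - 1 := by
    have : k * h ⌈/⌉ h = k := by rw [mul_comm, ← smul_eq_mul, smul_ceilDiv hh.pos]
    simp only [u, c, this, (hh.add_odd hk).neg_one_pow, one_mul]
  have hsum : ∑ q ∈ range h, u q = -(2 * floorSum k h + 1) := by
    rw [sum_congr rfl hu, sum_neg_distrib, neg_inj]
    calc ∑ q ∈ range h, sign k h q * (2 * (k * q / h : ℕ) + 1)
        = ∑ q ∈ range h, (2 * (sign k h q * (k * q / h : ℕ)) + sign k h q) :=
          sum_congr rfl fun q _ ↦ by ring
      _ = 2 * floorSum k h + 1 := by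
          rw [sum_add_distrib, ← mul_sum, sum_range_sign hk hh hhk.symm, floorSum]
  have hshift : ∑ q ∈ range h, u (q + 1) = ∑ q ∈ range h, u q + u h - u 0 := by
    rw [← sum_range_succ, sum_range_succ']
    ring
  rw [sum_add_distrib, hshift, hsum, hu0, huh] at hblocks
  linarith

theorem reciprocity (hh : Odd h) (hk : Odd k) (hhk : Nat.Coprime h k) :
    2 * h * indexSum h k + 2 * k * indexSum k h = h * k - 1 := by
  linear_combination 2 * mul_indexSum_sub_mul_floorSum hh hk hhk
    + k * two_mul_indexSum_add_two_mul_floorSum hk hh hhk.symm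

theorem saw_natCast_div {j : ℕ} (hj : 0 < j) (hjk : j < k) : saw (j / k) = j / k - 1 / 2 := by
  have hfloor : ⌊(j / k : ℚ)⌋ = 0 := by
    rw [Rat.floor_natCast_div_natCast, ← Int.natCast_div, Nat.div_eq_of_lt hjk, Nat.cast_zero]
  have hne : (j / k : ℚ) ≠ 0 :=
    div_ne_zero (by exact_mod_cast hj.ne') (by exact_mod_cast (hj.trans hjk).ne')
  rw [saw, hfloor, if_neg (by simpa using hne)]
  simp

theorem simsekY_natCast :
    simsekY h k = 4 * k * ∑ j ∈ Icc 1 k, sign h k j * saw (j / k) := by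
  have hIcc : Icc (1 : ℤ) k = (Icc 1 k).image (Nat.cast : ℕ → ℤ) := by
    apply coe_injective
    push_cast
    exact (Nat.image_cast_int_Icc 1 k).symm
  rw [simsekY, hIcc, sum_image (Nat.cast_injective.injOn)]
  push_cast
  refine congrArg _ (sum_congr rfl fun j _ ↦ ?_)
  rw [sign, ← Nat.cast_mul, Rat.floor_natCast_div_natCast, ← Int.natCast_div, ← Nat.cast_add,
    zpow_natCast]

theorem simsekY_eq_four_mul_indexSum (hh : Odd h) (hk : Odd k) (hhk : Nat.Coprime h k) :
    simsekY h k = 4 * indexSum h k := by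
  have hk0 : 0 < k := hk.pos
  have hsign0 : ∑ j ∈ Ico 1 k, sign h k j = 0 := by
    have := sum_range_sign hh hk hhk
    rw [sum_range_eq_add_Ico _ hk0] at this
    simpa [sign] using this
  have hlast : sign h k k * saw (k / k) = 0 := by
    rw [div_self (by exact_mod_cast hk0.ne')]
    simp [saw]
  rw [simsekY_natCast, ← Ico_add_one_right_eq_Icc, sum_Ico_succ_top hk0, hlast, add_zero,
    indexSum, sum_range_eq_add_Ico _ hk0, Nat.cast_zero, mul_zero, zero_add]
  calc 4 * k * ∑ j ∈ Ico 1 k, sign h k j * saw (j / k)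
      = ∑ j ∈ Ico 1 k, (4 * (sign h k j * j) - 2 * k * sign h k j) := by
        rw [mul_sum]
        refine sum_congr rfl fun j hj ↦ ?_
        rw [mem_Ico] at hj
        rw [saw_natCast_div hj.1 hj.2]
        field_simp
        ring
    _ = _ := by
        rw [sum_sub_distrib, ← mul_sum, ← mul_sum, hsign0, mul_zero, sub_zero]

theorem mul_simsekY_add_mul_simsekY (hh : Odd h) (hk : Odd k) (hhk : Nat.Coprime h k) :
    (h : ℚ) * simsekY h k + k * simsekY k h = 2 * (h * k - 1) := by
  rw [simsekY_eq_four_mul_indexSum hh hk hhk, simsekY_eq_four_mul_indexSum hk hh hhk.symm]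
  linear_combination 2 * reciprocity hh hk hhk

end Simsek

theorem stmt_16 (n : ℕ) (hn : 0 < n) (h k : ℤ)
    (hdef : h = (Nat.fib (6 * n - 1) : ℤ)) (kdef : k = (Nat.fib (6 * n + 1) : ℤ)) :
    (h : ℚ) * simsekY h k + (k : ℚ) * simsekY k h
      = 2 * (h : ℚ) ^ 2 + 2 * (k : ℚ) ^ 2 - 4 * (h : ℚ) * (k : ℚ) := by
  obtain ⟨m, hm⟩ : ∃ m, 6 * n = m + 1 := ⟨6 * n - 1, by omega⟩
  rw [show 6 * n - 1 = m by omega] at hdef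
  rw [show 6 * n + 1 = m + 2 by omega] at kdef
  subst hdef kdef
  have hodd (i : ℕ) (hi : ¬ 3 ∣ i) : Odd (Nat.fib i) :=
    (Nat.odd_fib_iff_not_three_dvd i).mpr hi
  have hcop : Nat.Coprime (Nat.fib m) (Nat.fib (m + 2)) := by
    rw [Nat.fib_add_two, add_comm, Nat.coprime_add_self_right]
    exact Nat.fib_coprime_fib_succ m
  have hcassini : (Nat.fib m : ℚ) * Nat.fib (m + 2) - Nat.fib (m + 1) ^ 2 = 1 := by
    have := Nat.fib_mul_fib_add_two_sub_sq m
    have heven : Even (m + 1) := ⟨3 * n, by omega⟩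
    rw [heven.neg_one_pow] at this
    exact_mod_cast this
  simp only [Int.cast_natCast]
  rw [Simsek.mul_simsekY_add_mul_simsekY (hodd m (by omega)) (hodd (m + 2) (by omega)) hcop]
  rw [Nat.fib_add_two] at hcassini ⊢
  push_cast at hcassini ⊢
  linear_combination 2 * hcassini
end

section
/- Let a and b be coprime positive integers. Then for all elements u, v of a commutative ring, (u-1)·Σ_{x=1}^{a-1} u^{x-1}·v^{⌊bx/a⌋} + (v-1)·Σ_{y=1}^{b-1} v^{y-1}·u^{⌊ay/b⌋} = u^{a-1}·v^{b-1} - 1. -/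
/-!
Put `f x = ⌊bx/a⌋` and `g y = ⌈a(y+1)/b⌉ - 1 = (a(y+1) - 1)/b`, so that `f x ≤ y < f (x+1)`
exactly when `g y = x`. Along the monotone staircase `x ↦ f x` from `(0,0)` to `(a,b)`, column `x`
contributes `(u^(x+1) - u^x) v^(f(x+1)) + u^x (v^(f(x+1)) - v^(f x))`, and these telescope to
`(u-1) Σ_{x<a} u^x v^(f(x+1)) + (v-1) Σ_{y<b} v^y u^(g y) = u^a v^b - 1`.
Coprimality gives `g y = ⌊a(y+1)/b⌋` for `y + 1 < b`, and peeling off the last terms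
`u^(a-1) v^b` and `v^(b-1) u^(a-1)` leaves the stated identity.
-/

open Finset

theorem staircase_sum_eq {R : Type*} [CommRing R] (u v : R) {F : ℕ → ℕ} (hF : Monotone F)
    (G : ℕ → ℕ) (hG : ∀ x y, F x ≤ y → y < F (x + 1) → G y = x) (n : ℕ) :
    (u - 1) * ∑ x ∈ range n, u ^ x * v ^ F (x + 1)
      + (v - 1) * ∑ y ∈ Ico (F 0) (F n), v ^ y * u ^ G y
      = u ^ n * v ^ F n - v ^ F 0 := by
  induction n with
  | zero => simp
  | succ n ih =>
    have hrow : ∑ y ∈ Ico (F n) (F (n + 1)), v ^ y * u ^ G y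
        = (∑ y ∈ Ico (F n) (F (n + 1)), v ^ y) * u ^ n := by
      rw [sum_mul]
      exact sum_congr rfl fun y hy ↦ by rw [hG n y (mem_Ico.1 hy).1 (mem_Ico.1 hy).2]
    have hgeom := geom_sum_Ico_mul v (hF n.le_succ)
    rw [sum_range_succ, ← sum_Ico_consecutive _ (hF n.zero_le) (hF n.le_succ), hrow]
    linear_combination ih + u ^ n * hgeom

theorem sum_Icc_one_sub_one_add {M : Type*} [AddCommMonoid M] (f : ℕ → M) {n : ℕ} (hn : 0 < n) :
    ∑ i ∈ Icc 1 (n - 1), f (i - 1) + f (n - 1) = ∑ i ∈ range n, f i := by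
  obtain ⟨m, rfl⟩ : ∃ m, n = m + 1 := ⟨n - 1, by omega⟩
  rw [Nat.add_sub_cancel, ← Ico_add_one_right_eq_Icc, sum_Ico_eq_sum_range, sum_range_succ]
  simp

theorem sub_one_div_eq_of_lt_le {m n k : ℕ} (h₁ : k * n < m) (h₂ : m ≤ (k + 1) * n) :
    (m - 1) / n = k :=
  Nat.div_eq_of_lt_le (by omega) (by omega)

theorem sub_one_div_eq_div_of_not_dvd {m n : ℕ} (hm : 0 < m) (h : ¬ n ∣ m) :
    (m - 1) / n = m / n := by
  rw [← Nat.succ_div_of_not_dvd (by rwa [Nat.sub_add_cancel hm]), Nat.sub_add_cancel hm]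

theorem Nat.Coprime.not_dvd_mul_of_pos_of_lt {a b y : ℕ} (hco : Nat.Coprime a b) (hy : 0 < y)
    (hyb : y < b) : ¬ b ∣ a * y := fun h ↦
  Nat.not_le_of_lt hyb (Nat.le_of_dvd hy (hco.symm.dvd_of_dvd_mul_left h))

theorem sub_one_div_eq_of_div_le_of_lt_div {a b x y : ℕ} (ha : 0 < a) (hx : b * x / a ≤ y)
    (hy : y < b * (x + 1) / a) : (a * (y + 1) - 1) / b = x := by
  rw [← Nat.lt_add_one_iff, Nat.div_lt_iff_lt_mul ha] at hx
  rw [← Nat.add_one_le_iff, Nat.le_div_iff_mul_le ha] at hy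
  exact sub_one_div_eq_of_lt_le (by linarith) (by linarith)

/-- The two-term polynomial relation of Berndt and Dieter: for coprime positive
integers `a, b` and commuting ring elements `u, v`,
`(u-1)·Σ_{x=1}^{a-1} u^{x-1} v^{⌊bx/a⌋} + (v-1)·Σ_{y=1}^{b-1} v^{y-1} u^{⌊ay/b⌋}
  = u^{a-1} v^{b-1} - 1`. -/
theorem stmt_17 (a b : ℕ) (ha : 0 < a) (hb : 0 < b) (hco : Nat.Coprime a b)
    (R : Type*) [CommRing R] (u v : R) :
    (u - 1) * (∑ x ∈ Finset.Icc 1 (a - 1), u ^ (x - 1) * v ^ (b * x / a))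
      + (v - 1) * (∑ y ∈ Finset.Icc 1 (b - 1), v ^ (y - 1) * u ^ (a * y / b))
      = u ^ (a - 1) * v ^ (b - 1) - 1 := by
  have hstair := staircase_sum_eq u v (fun _ _ h ↦ Nat.div_le_div_right (Nat.mul_le_mul_left b h))
    _ (fun _ _ ↦ sub_one_div_eq_of_div_le_of_lt_div ha) a
  have hcols : ∑ x ∈ Icc 1 (a - 1), u ^ (x - 1) * v ^ (b * (x - 1 + 1) / a)
      = ∑ x ∈ Icc 1 (a - 1), u ^ (x - 1) * v ^ (b * x / a) :=
    sum_congr rfl fun x hx ↦ by rw [Nat.sub_add_cancel (mem_Icc.1 hx).1]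
  have hrows : ∑ y ∈ Icc 1 (b - 1), v ^ (y - 1) * u ^ ((a * (y - 1 + 1) - 1) / b)
      = ∑ y ∈ Icc 1 (b - 1), v ^ (y - 1) * u ^ (a * y / b) := by
    refine sum_congr rfl fun y hy ↦ ?_
    obtain ⟨hy₁, hy₂⟩ := mem_Icc.1 hy
    rw [Nat.sub_add_cancel hy₁, sub_one_div_eq_div_of_not_dvd (Nat.mul_pos ha hy₁)
      (hco.not_dvd_mul_of_pos_of_lt hy₁ (by omega))]
  have hlast : (a * (b - 1 + 1) - 1) / b = a - 1 := by
    rw [Nat.sub_add_cancel hb]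
    exact sub_one_div_eq_of_lt_le (Nat.mul_lt_mul_of_pos_right (Nat.sub_lt ha one_pos) hb)
      (by rw [Nat.sub_add_cancel ha])
  rw [Nat.mul_zero, Nat.zero_div, Nat.mul_div_cancel b ha, ← range_eq_Ico,
    ← sum_Icc_one_sub_one_add _ ha, ← sum_Icc_one_sub_one_add _ hb, Nat.sub_add_cancel ha,
    Nat.mul_div_cancel b ha, hcols, hrows, hlast, ← mul_pow_sub_one ha.ne' u,
    ← mul_pow_sub_one hb.ne' v] at hstair
  linear_combination hstair
end
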